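/- arXiv:1604.07225 — 2 statements merged into one kernel-verified Lean document; each statement's English description precedes it below -/
import Mathlib

section
/- Let n ∈ ℕ, let ∅ ≠ 𝒱 ⊆ 𝒱ₙ and ℰ ⊆ ℰₙ, and let m, k ∈ ℕ. If the chromatic number satisfies χ(G(𝒱, ℰ)) ≥ 2 and k < log₂(χ(G(𝒱, ℰ))), then player D has a winning strategy in the formula size game FS_{m,k}(𝒱, ℰ). -/
universe u v

/-- A Kripke model for a set `Φ` of proposition symbols: a set of worlds `W`,
an accessibility relation `R` and a valuation `V`. -/
structure KripkeModel (Φ : Type) : Type (u + 1) where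
  W : Type u
  R : W → W → Prop
  V : Φ → W → Prop

/-- A pointed Kripke model: a Kripke model together with a distinguished world. -/
structure PointedModel (Φ : Type) : Type (u + 1) where
  M : KripkeModel.{u} Φ
  w : M.W

/-- Formulas of basic modal logic over the empty set of proposition symbols, in negation
normal form, generated from the atomic constants `⊤` and `⊥` by `∧`, `∨`, `◇`, `□`. -/
inductive MLF : Type where
  | top
  | bot
  | and (φ ψ : MLF)
  | or (φ ψ : MLF)
  | dia (φ : MLF)
  | box (φ : MLF)

/-- Standard Kripke semantics over frames (models for `Φ = ∅`). -/
def MLFSat (M : KripkeModel.{u} Empty) : M.W → MLF → Prop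
  | _, .top => True
  | _, .bot => False
  | w, .and φ ψ => MLFSat M w φ ∧ MLFSat M w ψ
  | w, .or φ ψ => MLFSat M w φ ∨ MLFSat M w ψ
  | w, .dia φ => ∃ x, M.R w x ∧ MLFSat M x φ
  | w, .box φ => ∀ x, M.R w x → MLFSat M x φ

/-- Literals over `Φ = ∅` are the atomic constants `⊤` and `⊥`. -/
def MLFIsLiteral : MLF → Prop
  | .top => True
  | .bot => True
  | _ => False

/-- The modal size `ms(φ)`: the number of modal operators `◇`, `□` in `φ`. -/
def mlfms : MLF → ℕ
  | .top => 0
  | .bot => 0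
  | .and φ ψ => mlfms φ + mlfms ψ
  | .or φ ψ => mlfms φ + mlfms ψ
  | .dia φ => mlfms φ + 1
  | .box φ => mlfms φ + 1

/-- The connective size `cs(φ)`: the number of binary connectives `∧`, `∨` in `φ`. -/
def mlfcs : MLF → ℕ
  | .top => 0
  | .bot => 0
  | .and φ ψ => mlfcs φ + mlfcs ψ + 1
  | .or φ ψ => mlfcs φ + mlfcs ψ + 1
  | .dia φ => mlfcs φ
  | .box φ => mlfcs φ

/-- A formula `φ` separates the classes `A` and `B` of pointed frames if `φ` is true in
every pointed frame of `A` and false in every pointed frame of `B`. -/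
def MLFSeparates (φ : MLF) (A B : Set (PointedModel.{u} Empty)) : Prop :=
  (∀ P ∈ A, MLFSat P.M P.w φ) ∧ (∀ P ∈ B, ¬ MLFSat P.M P.w φ)

/-- The set of successors of a pointed model: the same model pointed at any `R`-successor
of the distinguished world. -/
def succs {Φ : Type} (P : PointedModel.{u} Φ) : Set (PointedModel.{u} Φ) :=
  {Q | ∃ x : P.M.W, P.M.R P.w x ∧ Q = ⟨P.M, x⟩}

/-- `◇A`: all successors of all models in `A`. -/
def diaSet {Φ : Type} (A : Set (PointedModel.{u} Φ)) : Set (PointedModel.{u} Φ) :=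
  ⋃ P ∈ A, succs P

/-- `DWins m k A B` says that the player D (duplicator) has a winning strategy in the
formula size game `FS_{m,k}(A, B)` (over `Φ = ∅`, where the literals are `⊤` and `⊥`):
S does not win the current position (no literal separates `A` and `B`), for every
splitting move of S, D can choose a continuation that D wins, and D wins the position
resulting from every successor move of S. -/
def DWins (m k : ℕ) (A B : Set (PointedModel.{u} Empty)) : Prop :=
  (¬ ∃ φ : MLF, MLFIsLiteral φ ∧ MLFSeparates φ A B) ∧
  (∀ m₁ m₂ k₁ k₂ (A₁ A₂ : Set (PointedModel.{u} Empty)), m₁ + m₂ = m → k₁ + k₂ + 1 = k →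
      A₁ ∪ A₂ = A → DWins m₁ k₁ A₁ B ∨ DWins m₂ k₂ A₂ B) ∧
  (∀ m₁ m₂ k₁ k₂ (B₁ B₂ : Set (PointedModel.{u} Empty)), m₁ + m₂ = m → k₁ + k₂ + 1 = k →
      B₁ ∪ B₂ = B → DWins m₁ k₁ A B₁ ∨ DWins m₂ k₂ A B₂) ∧
  (∀ m' (f : PointedModel.{u} Empty → PointedModel.{u} Empty), m = m' + 1 →
      (∀ P ∈ A, f P ∈ succs P) → DWins m' k (f '' A) (diaSet B)) ∧
  (∀ m' (g : PointedModel.{u} Empty → PointedModel.{u} Empty), m = m' + 1 →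
      (∀ P ∈ B, g P ∈ succs P) → DWins m' k (diaSet A) (g '' B))
termination_by m + k
decreasing_by all_goals omega

/-- The finite levels of the cumulative hierarchy: `V₀ = ∅`, `V_{k+1} = 𝒫(V_k)`. -/
def Vlev : ℕ → ZFSet
  | 0 => ∅
  | n + 1 => ZFSet.powerset (Vlev n)

/-- The converse-membership accessibility relation on sets: `a R b` iff `b ∈ a`. -/
def zmem (a b : ZFSet) : Prop := b ∈ a

/-- `M_a`: the subframe of the frame `(V, ∋)` generated by the point `a`; its domain
consists of all points reachable from `a` by iterated membership. -/
def Ma (a : ZFSet) : KripkeModel.{1} Empty where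
  W := {x : ZFSet // Relation.ReflTransGen zmem a x}
  R := fun x y => zmem x.1 y.1
  V := fun p _ => p.elim

/-- The pointed frame `(M_a, a)`. -/
def Mpt (a : ZFSet) : PointedModel.{1} Empty :=
  ⟨Ma a, ⟨a, Relation.ReflTransGen.refl⟩⟩

/-- `⋁A`: the pointed frame obtained from a set `A` of pointed frames by adding a new
point (the new distinguished point) with `R`-edges to the distinguished point of each
member of `A`, keeping all original edges. -/
def vee (A : Set (PointedModel.{u} Empty)) : PointedModel.{u + 1} Empty where
  M :=
    { W := Option ((Q : {P : PointedModel.{u} Empty // P ∈ A}) × Q.1.M.W)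
      R := fun x y =>
        (∃ Q : {P : PointedModel.{u} Empty // P ∈ A}, x = none ∧ y = some ⟨Q, Q.1.w⟩) ∨
        (∃ (Q : {P : PointedModel.{u} Empty // P ∈ A}) (a b : Q.1.M.W),
          Q.1.M.R a b ∧ x = some ⟨Q, a⟩ ∧ y = some ⟨Q, b⟩)
      V := fun p _ => p.elim }
  w := none

/-- `𝒱ₙ = { ⋁{(M_a, a)} : a ∈ V_{n+1} }`. -/
def calV (n : ℕ) : Set (PointedModel.{2} Empty) :=
  {P | ∃ a, a ∈ Vlev (n + 1) ∧ P = vee {Mpt a}}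

/-- `ℰₙ = { ⋁{(M_a, a), (M_b, b)} : a, b ∈ V_{n+1}, a ≠ b }`. -/
def calE (n : ℕ) : Set (PointedModel.{2} Empty) :=
  {P | ∃ a b, a ∈ Vlev (n + 1) ∧ b ∈ Vlev (n + 1) ∧ a ≠ b ∧ P = vee {Mpt a, Mpt b}}

/-- The vertex set of the graph `G(𝒱, ℰ)`: the pointed frames `(M, w)` with
`⋁{(M, w)} ∈ 𝒱`. -/
def Vtx (VV : Set (PointedModel.{2} Empty)) : Type 2 :=
  {P : PointedModel.{1} Empty // vee {P} ∈ VV}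

/-- The edge relation of the graph `G(𝒱, ℰ)`: `(M, w)` and `(M', w')` are adjacent iff
`⋁{(M, w), (M', w')} ∈ ℰ`. -/
def Erel (VV EE : Set (PointedModel.{2} Empty)) : Vtx VV → Vtx VV → Prop :=
  fun P Q => vee {P.1, Q.1} ∈ EE

/-- `c` is a proper coloring of the graph with vertex set `X` and edge relation `E`:
adjacent vertices get different colors. -/
def IsProperColoring {X : Type v} (E : X → X → Prop) {k : ℕ} (c : X → Fin k) : Prop :=
  ∀ a b, E a b → c a ≠ c b

/-- The chromatic number: the smallest `k ∈ ℕ` for which there is a proper `k`-coloring. -/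
noncomputable def chrom {X : Type v} (E : X → X → Prop) : ℕ :=
  sInf {k : ℕ | ∃ c : X → Fin k, IsProperColoring E c}

/-!
D keeps the invariant that the graph `G(𝒜, ℬ)` of the current position has no proper
`2^k`-coloring. Such a graph has an edge `⋁{X} ∈ 𝒜`, `⋁{X, Y} ∈ ℬ`, so no literal separates the
position. If both halves of a left splitting `k = k₁ + k₂ + 1` had colorings with `2^k₁` and
`2^k₂` colors, they would combine into one with `2^k₁ + 2^k₂ ≤ 2^k` colors; for a right splitting
the product coloring has `2^k₁ · 2^k₂ ≤ 2^k` colors. After a successor move the position contains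
a bisimilar pair, since the successors of `⋁{X}` and `⋁{X, Y}` are copies of `X` and `Y`; and a
position containing a bisimilar pair is won by D whatever S does.
-/

universe w

def IsBisim (P : PointedModel.{u} Empty) (Q : PointedModel.{v} Empty)
    (Z : P.M.W → Q.M.W → Prop) : Prop :=
  Z P.w Q.w ∧
  (∀ a b, Z a b → ∀ a', P.M.R a a' → ∃ b', Q.M.R b b' ∧ Z a' b') ∧
  (∀ a b, Z a b → ∀ b', Q.M.R b b' → ∃ a', P.M.R a a' ∧ Z a' b')

def Bisim (P : PointedModel.{u} Empty) (Q : PointedModel.{v} Empty) : Prop :=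
  ∃ Z, IsBisim P Q Z

theorem Bisim.symm {P : PointedModel.{u} Empty} {Q : PointedModel.{v} Empty} (h : Bisim P Q) :
    Bisim Q P := by
  obtain ⟨Z, h₀, hforth, hback⟩ := h
  exact ⟨fun b a => Z a b, h₀, fun b a hab => hback a b hab, fun b a hab => hforth a b hab⟩

theorem Bisim.trans {P : PointedModel.{u} Empty} {Q : PointedModel.{v} Empty}
    {R : PointedModel.{w} Empty} (h₁ : Bisim P Q) (h₂ : Bisim Q R) : Bisim P R := by
  obtain ⟨Z₁, i₁, f₁, b₁⟩ := h₁
  obtain ⟨Z₂, i₂, f₂, b₂⟩ := h₂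
  refine ⟨fun a c => ∃ b, Z₁ a b ∧ Z₂ b c, ⟨Q.w, i₁, i₂⟩, ?_, ?_⟩
  · rintro a c ⟨b, hab, hbc⟩ a' ha'
    obtain ⟨b', hb', hZ₁⟩ := f₁ a b hab a' ha'
    obtain ⟨c', hc', hZ₂⟩ := f₂ b c hbc b' hb'
    exact ⟨c', hc', b', hZ₁, hZ₂⟩
  · rintro a c ⟨b, hab, hbc⟩ c' hc'
    obtain ⟨b', hb', hZ₂⟩ := b₂ b c hbc c' hc'
    obtain ⟨a', ha', hZ₁⟩ := b₁ a b hab b' hb'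
    exact ⟨a', ha', b', hZ₁, hZ₂⟩

theorem Bisim.exists_mem_succs_forth {P P' : PointedModel.{u} Empty} {Q : PointedModel.{v} Empty}
    (h : Bisim P Q) (hP' : P' ∈ succs P) : ∃ Q' ∈ succs Q, Bisim P' Q' := by
  obtain ⟨Z, h₀, hforth, hback⟩ := h
  obtain ⟨x, hx, rfl⟩ := hP'
  obtain ⟨y, hy, hxy⟩ := hforth _ _ h₀ x hx
  exact ⟨_, ⟨y, hy, rfl⟩, Z, hxy, hforth, hback⟩

theorem Bisim.exists_mem_succs_back {P : PointedModel.{u} Empty} {Q Q' : PointedModel.{v} Empty}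
    (h : Bisim P Q) (hQ' : Q' ∈ succs Q) : ∃ P' ∈ succs P, Bisim P' Q' := by
  obtain ⟨P', hP', h'⟩ := h.symm.exists_mem_succs_forth hQ'
  exact ⟨P', hP', h'.symm⟩

section Vee

variable {S : Set (PointedModel.{u} Empty)}

theorem bisim_vee_some (P : {P : PointedModel.{u} Empty // P ∈ S}) (x : P.1.M.W) :
    Bisim (⟨(vee S).M, some ⟨P, x⟩⟩ : PointedModel.{u + 1} Empty) ⟨P.1.M, x⟩ := by
  refine ⟨fun a b => a = some ⟨P, b⟩, rfl, ?_, ?_⟩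
  · rintro _ b rfl a' (⟨_, hnone, -⟩ | ⟨Q, c, d, hcd, hc, rfl⟩)
    · exact (Option.some_ne_none _ hnone).elim
    · obtain ⟨rfl, hbc⟩ := Sigma.mk.inj_iff.mp (Option.some.inj hc)
      obtain rfl := eq_of_heq hbc
      exact ⟨d, hcd, rfl⟩
  · rintro _ b rfl b' hb'
    exact ⟨some ⟨P, b'⟩, Or.inr ⟨P, b, b', hb', rfl, rfl⟩, rfl⟩

theorem exists_bisim_of_mem_succs_vee {Q : PointedModel.{u + 1} Empty}
    (hQ : Q ∈ succs (vee S)) : ∃ P ∈ S, Bisim Q P := by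
  obtain ⟨x, hx, rfl⟩ := hQ
  rcases hx with ⟨P, -, rfl⟩ | ⟨_, _, _, -, hnone, -⟩
  · exact ⟨P.1, P.2, bisim_vee_some P P.1.w⟩
  · exact (Option.some_ne_none _ hnone.symm).elim

theorem exists_mem_succs_vee_bisim {P : PointedModel.{u} Empty} (hP : P ∈ S) :
    ∃ Q ∈ succs (vee S), Bisim Q P :=
  ⟨_, ⟨some ⟨⟨P, hP⟩, P.w⟩, Or.inl ⟨⟨P, hP⟩, rfl, rfl⟩, rfl⟩, bisim_vee_some ⟨P, hP⟩ P.w⟩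

end Vee

theorem not_exists_literal_separates {A B : Set (PointedModel.{u} Empty)} (hA : A.Nonempty)
    (hB : B.Nonempty) : ¬ ∃ φ, MLFIsLiteral φ ∧ MLFSeparates φ A B := by
  rintro ⟨φ, hlit, hφA, hφB⟩
  obtain ⟨P, hP⟩ := hA
  obtain ⟨Q, hQ⟩ := hB
  cases φ with
  | top => exact hφB Q hQ trivial
  | bot => exact hφA P hP
  | _ => exact hlit

theorem dWins_of_bisim (m k : ℕ) {A B : Set (PointedModel.{u} Empty)} {P Q : PointedModel Empty}
    (hP : P ∈ A) (hQ : Q ∈ B) (hPQ : Bisim P Q) : DWins m k A B := by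
  rw [DWins]
  refine ⟨not_exists_literal_separates ⟨P, hP⟩ ⟨Q, hQ⟩, ?_, ?_, ?_, ?_⟩
  · intro m₁ m₂ k₁ k₂ A₁ A₂ _ _ hA
    rcases (hA ▸ hP : P ∈ A₁ ∪ A₂) with hP₁ | hP₂
    · exact .inl (dWins_of_bisim m₁ k₁ hP₁ hQ hPQ)
    · exact .inr (dWins_of_bisim m₂ k₂ hP₂ hQ hPQ)
  · intro m₁ m₂ k₁ k₂ B₁ B₂ _ _ hB
    rcases (hB ▸ hQ : Q ∈ B₁ ∪ B₂) with hQ₁ | hQ₂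
    · exact .inl (dWins_of_bisim m₁ k₁ hP hQ₁ hPQ)
    · exact .inr (dWins_of_bisim m₂ k₂ hP hQ₂ hPQ)
  · intro m' f _ hf
    obtain ⟨Q', hQ', hfQ'⟩ := hPQ.exists_mem_succs_forth (hf P hP)
    exact dWins_of_bisim m' k (Set.mem_image_of_mem f hP) (Set.mem_biUnion hQ hQ') hfQ'
  · intro m' g _ hg
    obtain ⟨P', hP', hP'g⟩ := hPQ.exists_mem_succs_back (hg Q hQ)
    exact dWins_of_bisim m' k (Set.mem_biUnion hP hP') (Set.mem_image_of_mem g hQ) hP'g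
termination_by m + k
decreasing_by all_goals omega

section Coloring

variable {X : Type v}

def HasProperColoring (E : X → X → Prop) (k : ℕ) : Prop :=
  ∃ c : X → Fin k, IsProperColoring E c

theorem HasProperColoring.mono {E : X → X → Prop} {k k' : ℕ} (h : HasProperColoring E k)
    (hk : k ≤ k') : HasProperColoring E k' := by
  obtain ⟨c, hc⟩ := h
  exact ⟨Fin.castLE hk ∘ c, fun a b hab hcab => hc a b hab (Fin.castLE_injective hk hcab)⟩

theorem HasProperColoring.or {E₁ E₂ : X → X → Prop} {k₁ k₂ : ℕ} (h₁ : HasProperColoring E₁ k₁)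
    (h₂ : HasProperColoring E₂ k₂) :
    HasProperColoring (fun a b => E₁ a b ∨ E₂ a b) (k₁ * k₂) := by
  obtain ⟨c₁, hc₁⟩ := h₁
  obtain ⟨c₂, hc₂⟩ := h₂
  refine ⟨fun x => finProdFinEquiv (c₁ x, c₂ x), fun a b hab hcab => ?_⟩
  have hc := finProdFinEquiv.injective hcab
  rcases hab with hab | hab
  · exact hc₁ a b hab (congrArg Prod.fst hc)
  · exact hc₂ a b hab (congrArg Prod.snd hc)

theorem exists_adj_of_not_hasProperColoring {E : X → X → Prop} {k : ℕ} (hk : 0 < k)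
    (h : ¬ HasProperColoring E k) : ∃ a b, E a b := by
  by_contra! hE
  exact h ⟨fun _ => ⟨0, hk⟩, fun a b hab => (hE a b hab).elim⟩

end Coloring

theorem HasProperColoring.erel_union {A₁ A₂ B : Set (PointedModel.{2} Empty)} {k₁ k₂ : ℕ}
    (h₁ : HasProperColoring (Erel A₁ B) k₁) (h₂ : HasProperColoring (Erel A₂ B) k₂) :
    HasProperColoring (Erel (A₁ ∪ A₂) B) (k₁ + k₂) := by
  classical
  obtain ⟨c₁, hc₁⟩ := h₁
  obtain ⟨c₂, hc₂⟩ := h₂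
  let c : Vtx (A₁ ∪ A₂) → Fin k₁ ⊕ Fin k₂ := fun x =>
    if hx : vee {x.1} ∈ A₁ then .inl (c₁ ⟨x.1, hx⟩) else .inr (c₂ ⟨x.1, x.2.resolve_left hx⟩)
  refine ⟨finSumFinEquiv ∘ c, fun a b hab hcab => ?_⟩
  replace hcab : c a = c b := finSumFinEquiv.injective hcab
  by_cases ha : vee {a.1} ∈ A₁ <;> by_cases hb : vee {b.1} ∈ A₁ <;>
    simp only [c, ha, hb, dite_true, dite_false, reduceCtorEq, Sum.inl.injEq,
      Sum.inr.injEq] at hcab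
  · exact hc₁ ⟨a.1, ha⟩ ⟨b.1, hb⟩ hab hcab
  · exact hc₂ ⟨a.1, _⟩ ⟨b.1, _⟩ hab hcab

theorem two_pow_add_two_pow_le (k₁ k₂ : ℕ) : 2 ^ k₁ + 2 ^ k₂ ≤ 2 ^ (k₁ + k₂ + 1) := by
  have h₁ : 2 ^ k₁ ≤ 2 ^ (k₁ + k₂) := Nat.pow_le_pow_right two_pos (by omega)
  have h₂ : 2 ^ k₂ ≤ 2 ^ (k₁ + k₂) := Nat.pow_le_pow_right two_pos (by omega)
  rw [pow_succ]
  omega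

theorem two_pow_mul_two_pow_le (k₁ k₂ : ℕ) : 2 ^ k₁ * 2 ^ k₂ ≤ 2 ^ (k₁ + k₂ + 1) := by
  rw [← pow_add]
  exact Nat.pow_le_pow_right two_pos (by omega)

theorem dWins_of_not_hasProperColoring (k m : ℕ) (A B : Set (PointedModel.{2} Empty))
    (h : ¬ HasProperColoring (Erel A B) (2 ^ k)) : DWins m k A B := by
  obtain ⟨X, Y, hXY⟩ := exists_adj_of_not_hasProperColoring (Nat.two_pow_pos k) h
  rw [DWins]
  refine ⟨not_exists_literal_separates ⟨_, X.2⟩ ⟨_, hXY⟩, ?_, ?_, ?_, ?_⟩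
  · rintro m₁ m₂ k₁ k₂ A₁ A₂ - rfl rfl
    refine (not_and_or.mp fun hc => h ?_).imp
      (dWins_of_not_hasProperColoring k₁ m₁ A₁ B) (dWins_of_not_hasProperColoring k₂ m₂ A₂ B)
    exact (hc.1.erel_union hc.2).mono (two_pow_add_two_pow_le k₁ k₂)
  · rintro m₁ m₂ k₁ k₂ B₁ B₂ - rfl rfl
    refine (not_and_or.mp fun hc => h ?_).imp
      (dWins_of_not_hasProperColoring k₁ m₁ A B₁) (dWins_of_not_hasProperColoring k₂ m₂ A B₂)
    exact (hc.1.or hc.2).mono (two_pow_mul_two_pow_le k₁ k₂)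
  · intro m' f _ hf
    obtain ⟨P, rfl, hfP⟩ := exists_bisim_of_mem_succs_vee (hf _ X.2)
    obtain ⟨Q, hQ, hQP⟩ := exists_mem_succs_vee_bisim (Set.mem_insert X.1 {Y.1})
    exact dWins_of_bisim m' k (Set.mem_image_of_mem f X.2) (Set.mem_biUnion hXY hQ)
      (hfP.trans hQP.symm)
  · intro m' g _ hg
    obtain ⟨P, hP, hgP⟩ := exists_bisim_of_mem_succs_vee (hg _ hXY)
    obtain ⟨Z, rfl⟩ : ∃ Z : Vtx A, Z.1 = P := by
      rcases hP with rfl | rfl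
      exacts [⟨X, rfl⟩, ⟨Y, rfl⟩]
    obtain ⟨Q, hQ, hQZ⟩ := exists_mem_succs_vee_bisim (Set.mem_singleton Z.1)
    exact dWins_of_bisim m' k (Set.mem_biUnion Z.2 hQ) (Set.mem_image_of_mem g hXY)
      (hQZ.trans hgP.symm)
termination_by k
decreasing_by all_goals omega

theorem two_pow_lt_of_lt_logb {k c : ℕ} (h : (k : ℝ) < Real.logb 2 c) : 2 ^ k < c := by
  have hc : (0 : ℝ) < c := by
    rcases (Nat.cast_nonneg c : (0 : ℝ) ≤ c).lt_or_eq with hc | hc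
    · exact hc
    · rw [← hc, Real.logb_zero] at h
      exact absurd h (Nat.cast_nonneg k).not_gt
  exact_mod_cast (Real.lt_logb_iff_rpow_lt one_lt_two hc).mp h

theorem dwins_of_chrom_general (m k : ℕ) (VV EE : Set (PointedModel.{2} Empty))
    (hk : (k : ℝ) < Real.logb 2 (chrom (Erel VV EE))) :
    DWins m k VV EE := by
  refine dWins_of_not_hasProperColoring k m VV EE fun hcol => ?_
  exact (two_pow_lt_of_lt_logb hk).not_ge (Nat.sInf_le hcol)

/-- **Lemma 16 (Hella–Vilander).**  If `∅ ≠ 𝒱 ⊆ 𝒱ₙ`, `ℰ ⊆ ℰₙ`, `χ(G(𝒱, ℰ)) ≥ 2` and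
`k < log₂ χ(G(𝒱, ℰ))`, then D has a winning strategy in the game `FS_{m,k}(𝒱, ℰ)`. -/
theorem dwins_of_chrom (n m k : ℕ) (VV EE : Set (PointedModel.{2} Empty))
    (hne : VV.Nonempty) (hV : VV ⊆ calV n) (hE : EE ⊆ calE n)
    (h2 : 2 ≤ chrom (Erel VV EE))
    (hk : (k : ℝ) < Real.logb 2 (chrom (Erel VV EE))) :
    DWins m k VV EE :=
  dwins_of_chrom_general m k VV EE hk
end

section
/- For every n ≥ 1 and all m, k ∈ ℕ with k < tower(n−1), player D has a winning strategy in the formula size game FS_{m,k}(𝒱ₙ, ℰₙ). -/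
universe u v

/-- The exponential tower function: `tower 0 = 1` and `tower (n+1) = 2 ^ tower n`. -/
def tower : ℕ → ℕ
  | 0 => 1
  | n + 1 => 2 ^ tower n

/-! By the soundness of the formula size game, it suffices to show that no formula `φ` with
`cs(φ) < tower (n - 1)` separates `𝒱ₙ` from `ℰₙ`. Such a `φ` is a positive Boolean combination of
at most `cs(φ) + 1 ≤ tower (n - 1)` modal subformulas `◇ψ`, `□ψ`, and at `⋁{(M_a, a)}` both `◇ψ`
and `□ψ` say just that `ψ` holds at `(M_a, a)`. Since `V_{n+1}` has `tower n = 2 ^ tower (n - 1)`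
elements, either two distinct `a, b ∈ V_{n+1}` give the same truth values to these modal
subformulas, and then each of them true at `⋁{(M_a, a)}` is also true at `⋁{(M_a, a), (M_b, b)}`;
or every truth assignment occurs, in particular the all-false one, and then the positive
combination `φ` holds at every frame of `ℰₙ`. -/

section Game

variable {A A₁ A₂ B B₁ B₂ : Set (PointedModel.{u} Empty)} {φ φ₁ φ₂ : MLF}

theorem MLFSeparates.or (h₁ : MLFSeparates φ₁ A₁ B) (h₂ : MLFSeparates φ₂ A₂ B) :
    MLFSeparates (.or φ₁ φ₂) (A₁ ∪ A₂) B :=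
  ⟨fun P hP => hP.elim (fun h => Or.inl (h₁.1 P h)) (fun h => Or.inr (h₂.1 P h)),
    fun P hP hsat => hsat.elim (h₁.2 P hP) (h₂.2 P hP)⟩

theorem MLFSeparates.and (h₁ : MLFSeparates φ₁ A B₁) (h₂ : MLFSeparates φ₂ A B₂) :
    MLFSeparates (.and φ₁ φ₂) A (B₁ ∪ B₂) :=
  ⟨fun P hP => ⟨h₁.1 P hP, h₂.1 P hP⟩,
    fun P hP hsat => hP.elim (fun h => h₁.2 P h hsat.1) (fun h => h₂.2 P h hsat.2)⟩

theorem MLFSeparates.dia {f : PointedModel.{u} Empty → PointedModel.{u} Empty}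
    (hf : ∀ P ∈ A, f P ∈ succs P) (h : MLFSeparates φ (f '' A) (diaSet B)) :
    MLFSeparates (.dia φ) A B := by
  refine ⟨fun P hP => ?_, fun Q hQ ⟨x, hx, hsat⟩ =>
    h.2 ⟨Q.M, x⟩ (Set.mem_biUnion hQ ⟨x, hx, rfl⟩) hsat⟩
  obtain ⟨x, hx, hfx⟩ := hf P hP
  have hsat := h.1 (f P) ⟨P, hP, rfl⟩
  rw [hfx] at hsat
  exact ⟨x, hx, hsat⟩

theorem MLFSeparates.box {g : PointedModel.{u} Empty → PointedModel.{u} Empty}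
    (hg : ∀ P ∈ B, g P ∈ succs P) (h : MLFSeparates φ (diaSet A) (g '' B)) :
    MLFSeparates (.box φ) A B := by
  refine ⟨fun P hP x hx => h.1 ⟨P.M, x⟩ (Set.mem_biUnion hP ⟨x, hx, rfl⟩),
    fun Q hQ hbox => ?_⟩
  obtain ⟨x, hx, hgx⟩ := hg Q hQ
  exact h.2 (g Q) ⟨Q, hQ, rfl⟩ (hgx ▸ hbox x hx)

theorem exists_separates_of_not_dWins {m k : ℕ} {A B : Set (PointedModel.{u} Empty)}
    (h : ¬ DWins m k A B) :
    ∃ φ, mlfms φ ≤ m ∧ mlfcs φ ≤ k ∧ MLFSeparates φ A B := by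
  by_contra! hno
  apply h
  rw [DWins]
  refine ⟨?_, ?_, ?_, ?_, ?_⟩
  · rintro ⟨φ, hlit, hsep⟩
    refine hno φ ?_ ?_ hsep <;> cases φ <;> first | exact Nat.zero_le _ | exact hlit.elim
  · intro m₁ m₂ k₁ k₂ A₁ A₂ hm hk hA
    by_contra! hD
    obtain ⟨φ₁, hm₁, hk₁, hs₁⟩ := exists_separates_of_not_dWins hD.1
    obtain ⟨φ₂, hm₂, hk₂, hs₂⟩ := exists_separates_of_not_dWins hD.2
    exact hno (.or φ₁ φ₂) (by simp only [mlfms]; omega) (by simp only [mlfcs]; omega)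
      (hA ▸ hs₁.or hs₂)
  · intro m₁ m₂ k₁ k₂ B₁ B₂ hm hk hB
    by_contra! hD
    obtain ⟨φ₁, hm₁, hk₁, hs₁⟩ := exists_separates_of_not_dWins hD.1
    obtain ⟨φ₂, hm₂, hk₂, hs₂⟩ := exists_separates_of_not_dWins hD.2
    exact hno (.and φ₁ φ₂) (by simp only [mlfms]; omega) (by simp only [mlfcs]; omega)
      (hB ▸ hs₁.and hs₂)
  · intro m' f hm hf
    by_contra hD
    obtain ⟨φ, hms, hcs, hs⟩ := exists_separates_of_not_dWins hD
    exact hno (.dia φ) (by simp only [mlfms]; omega) hcs (hs.dia hf)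
  · intro m' g hm hg
    by_contra hD
    obtain ⟨φ, hms, hcs, hs⟩ := exists_separates_of_not_dWins hD
    exact hno (.box φ) (by simp only [mlfms]; omega) hcs (hs.box hg)
termination_by m + k
decreasing_by all_goals omega

end Game

section ModalAtoms

def IsModal : MLF → Prop
  | .dia _ => True
  | .box _ => True
  | _ => False

/-- The maximal modal subformulas of `φ`, of which `φ` is a positive Boolean combination. -/
def modalAtoms : MLF → List MLF
  | .top | .bot => []
  | .and φ ψ | .or φ ψ => modalAtoms φ ++ modalAtoms ψ
  | .dia φ => [.dia φ]
  | .box φ => [.box φ]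

theorem length_modalAtoms_le (φ : MLF) : (modalAtoms φ).length ≤ mlfcs φ + 1 := by
  induction φ with
  | top | bot | dia | box => simp [modalAtoms, mlfcs]
  | and φ ψ ih₁ ih₂ | or φ ψ ih₁ ih₂ =>
    simp only [modalAtoms, mlfcs, List.length_append]
    omega

theorem isModal_of_mem_modalAtoms {φ χ : MLF} (h : χ ∈ modalAtoms φ) : IsModal χ := by
  induction φ with
  | top | bot => simp [modalAtoms] at h
  | and φ ψ ih₁ ih₂ | or φ ψ ih₁ ih₂ =>
    rcases List.mem_append.mp h with h | h
    · exact ih₁ h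
    · exact ih₂ h
  | dia | box =>
    rw [modalAtoms, List.mem_singleton] at h
    subst h
    trivial

theorem MLFSat.of_modalAtoms {M : KripkeModel.{u} Empty} {M' : KripkeModel.{v} Empty}
    {w : M.W} {w' : M'.W} {φ : MLF}
    (h : ∀ χ ∈ modalAtoms φ, MLFSat M w χ → MLFSat M' w' χ) (hφ : MLFSat M w φ) :
    MLFSat M' w' φ := by
  induction φ with
  | top => trivial
  | bot => exact hφ.elim
  | and φ ψ ih₁ ih₂ =>
    exact ⟨ih₁ (fun χ hχ => h χ (List.mem_append_left _ hχ)) hφ.1,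
      ih₂ (fun χ hχ => h χ (List.mem_append_right _ hχ)) hφ.2⟩
  | or φ ψ ih₁ ih₂ =>
    exact hφ.imp (ih₁ fun χ hχ => h χ (List.mem_append_left _ hχ))
      (ih₂ fun χ hχ => h χ (List.mem_append_right _ hχ))
  | dia | box => exact h _ (List.mem_singleton_self _) hφ

end ModalAtoms

section Vee

variable {A B : Set (PointedModel.{u} Empty)}

theorem vee_R_none_iff {y : (vee A).M.W} :
    (vee A).M.R none y ↔ ∃ Q : {P // P ∈ A}, y = some ⟨Q, Q.1.w⟩ := by
  constructor
  · rintro (⟨Q, -, rfl⟩ | ⟨Q, a, b, -, h, -⟩)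
    · exact ⟨Q, rfl⟩
    · exact nomatch h
  · rintro ⟨Q, rfl⟩
    exact Or.inl ⟨Q, rfl, rfl⟩

theorem vee_R_some_iff {Q : {P // P ∈ A}} {v : Q.1.M.W} {y : (vee A).M.W} :
    (vee A).M.R (some ⟨Q, v⟩) y ↔ ∃ b, Q.1.M.R v b ∧ y = some ⟨Q, b⟩ := by
  constructor
  · rintro (⟨Q', h, -⟩ | ⟨Q', a, b, hab, h, rfl⟩)
    · exact nomatch h
    · obtain ⟨rfl, h⟩ := Sigma.mk.inj_iff.mp (Option.some.inj h)
      cases eq_of_heq h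
      exact ⟨b, hab, rfl⟩
  · rintro ⟨b, hb, rfl⟩
    exact Or.inr ⟨Q, v, b, hb, rfl, rfl⟩

theorem sat_vee_some_iff (ψ : MLF) (Q : {P // P ∈ A}) (v : Q.1.M.W) :
    MLFSat (vee A).M (some ⟨Q, v⟩) ψ ↔ MLFSat Q.1.M v ψ := by
  induction ψ generalizing v with
  | top | bot => simp only [MLFSat]
  | and φ χ ih₁ ih₂ | or φ χ ih₁ ih₂ => simp only [MLFSat, ih₁, ih₂]
  | dia φ ih =>
    simp only [MLFSat]
    constructor
    · rintro ⟨y, hR, hy⟩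
      obtain ⟨b, hb, rfl⟩ := vee_R_some_iff.mp hR
      exact ⟨b, hb, (ih b).mp hy⟩
    · rintro ⟨b, hb, hsat⟩
      exact ⟨some ⟨Q, b⟩, vee_R_some_iff.mpr ⟨b, hb, rfl⟩, (ih b).mpr hsat⟩
  | box φ ih =>
    simp only [MLFSat]
    constructor
    · intro H b hb
      exact (ih b).mp (H _ (vee_R_some_iff.mpr ⟨b, hb, rfl⟩))
    · intro H y hR
      obtain ⟨b, hb, rfl⟩ := vee_R_some_iff.mp hR
      exact (ih b).mpr (H b hb)

theorem sat_vee_dia_iff (ψ : MLF) :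
    MLFSat (vee A).M (vee A).w (.dia ψ) ↔ ∃ P ∈ A, MLFSat P.M P.w ψ := by
  simp only [MLFSat]
  constructor
  · rintro ⟨y, hR, hy⟩
    obtain ⟨Q, rfl⟩ := vee_R_none_iff.mp hR
    exact ⟨Q.1, Q.2, (sat_vee_some_iff ψ Q _).mp hy⟩
  · rintro ⟨P, hP, h⟩
    exact ⟨some ⟨⟨P, hP⟩, P.w⟩, vee_R_none_iff.mpr ⟨⟨P, hP⟩, rfl⟩,
      (sat_vee_some_iff ψ ⟨P, hP⟩ _).mpr h⟩

theorem sat_vee_box_iff (ψ : MLF) :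
    MLFSat (vee A).M (vee A).w (.box ψ) ↔ ∀ P ∈ A, MLFSat P.M P.w ψ := by
  simp only [MLFSat]
  constructor
  · intro H P hP
    exact (sat_vee_some_iff ψ ⟨P, hP⟩ _).mp (H _ (vee_R_none_iff.mpr ⟨⟨P, hP⟩, rfl⟩))
  · intro H y hR
    obtain ⟨Q, rfl⟩ := vee_R_none_iff.mp hR
    exact (sat_vee_some_iff ψ Q _).mpr (H Q.1 Q.2)

theorem sat_vee_union_of_isModal {χ : MLF} (hχ : IsModal χ)
    (hA : MLFSat (vee A).M (vee A).w χ) (hB : MLFSat (vee B).M (vee B).w χ) :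
    MLFSat (vee (A ∪ B)).M (vee (A ∪ B)).w χ := by
  cases χ with
  | dia ψ =>
    rw [sat_vee_dia_iff] at hA ⊢
    obtain ⟨P, hP, h⟩ := hA
    exact ⟨P, Or.inl hP, h⟩
  | box ψ =>
    rw [sat_vee_box_iff] at hA hB ⊢
    exact fun P hP => hP.elim (hA P) (hB P)
  | _ => exact hχ.elim

end Vee

section Hierarchy

theorem ZFSet.empty_ne_singleton (x : ZFSet) : (∅ : ZFSet) ≠ {x} :=
  (ne_of_mem_of_not_mem' (ZFSet.mem_singleton.mpr rfl) (ZFSet.notMem_empty x)).symm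

theorem card_Vlev_succ (n : ℕ) : (Vlev (n + 1)).card = tower n := by
  induction n with
  | zero => simp [Vlev, tower]
  | succ n ih => rw [Vlev, ZFSet.card_powerset, ih, tower]; push_cast; rfl

theorem nat_card_Vlev_succ (n : ℕ) : Nat.card (Vlev (n + 1)) = tower n := by
  rw [Nat.card, ZFSet.cardinalMk_coe_sort, card_Vlev_succ]
  simp

theorem empty_mem_Vlev_succ (n : ℕ) : ∅ ∈ Vlev (n + 1) :=
  ZFSet.mem_powerset.mpr (ZFSet.empty_subset _)

theorem singleton_empty_mem_Vlev_succ {n : ℕ} (hn : 1 ≤ n) : {∅} ∈ Vlev (n + 1) := by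
  obtain ⟨n, rfl⟩ := Nat.exists_eq_add_of_le' hn
  exact ZFSet.mem_powerset.mpr fun z hz => ZFSet.mem_singleton.mp hz ▸ empty_mem_Vlev_succ n

end Hierarchy

theorem not_separates_calV_calE {n : ℕ} (hn : 1 ≤ n) {φ : MLF}
    (hφ : mlfcs φ < tower (n - 1)) :
    ¬ MLFSeparates φ (calV n) (calE n) := by
  classical
  rintro ⟨hV, hE⟩
  let atoms := (modalAtoms φ).toFinset
  let profile : Vlev.{0} (n + 1) → atoms → Prop := fun a χ => MLFSat (vee {Mpt a}).M none χ
  have hsingle (a : Vlev.{0} (n + 1)) : MLFSat (vee {Mpt a}).M none φ := hV _ ⟨a, a.2, rfl⟩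
  have hcard : Nat.card (atoms → Prop) ≤ Nat.card (Vlev.{0} (n + 1)) := by
    obtain ⟨n, rfl⟩ := Nat.exists_eq_add_of_le' hn
    rw [Nat.card_fun, Nat.card_eq_fintype_card (α := Prop), Fintype.card_prop,
      Nat.card_eq_fintype_card, Fintype.card_coe, nat_card_Vlev_succ, tower]
    exact Nat.pow_le_pow_right two_pos
      ((List.toFinset_card_le _).trans ((length_modalAtoms_le φ).trans hφ))
  by_cases hinj : Function.Injective profile
  · obtain ⟨a₀, ha₀⟩ := (hinj.bijective_of_nat_card_le hcard).2 fun _ => False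
    refine hE _ ⟨∅, {∅}, empty_mem_Vlev_succ n, singleton_empty_mem_Vlev_succ hn,
      ZFSet.empty_ne_singleton ∅, rfl⟩ (MLFSat.of_modalAtoms (fun χ hχ hsat => ?_) (hsingle a₀))
    have hfalse : MLFSat (vee {Mpt a₀}).M none χ = False :=
      congrFun ha₀ ⟨χ, List.mem_toFinset.mpr hχ⟩
    exact (hfalse ▸ hsat).elim
  · obtain ⟨a, b, hab, hne⟩ := Function.not_injective_iff.mp hinj
    refine hE _ ⟨a, b, a.2, b.2, Subtype.coe_ne_coe.mpr hne, rfl⟩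
      (MLFSat.of_modalAtoms (fun χ hχ hsat => ?_) (hsingle a))
    have hagree : MLFSat (vee {Mpt a}).M none χ = MLFSat (vee {Mpt b}).M none χ :=
      congrFun hab ⟨χ, List.mem_toFinset.mpr hχ⟩
    rw [Set.insert_eq]
    exact sat_vee_union_of_isModal (isModal_of_mem_modalAtoms hχ) hsat (hagree ▸ hsat)

/-- **Lemma 17 (Hella–Vilander).**  If `k < tower (n-1)`, then D has a winning strategy
in the game `FS_{m,k}(𝒱ₙ, ℰₙ)`. -/
theorem dwins_calV_calE (n m k : ℕ) (hn : 1 ≤ n) (hk : k < tower (n - 1)) :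
    DWins m k (calV n) (calE n) := by
  by_contra h
  obtain ⟨φ, -, hcs, hsep⟩ := exists_separates_of_not_dWins h
  exact not_separates_calV_calE hn (hcs.trans_lt hk) hsep
end
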